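/- Fix a moment–quantile uncertainty set 𝓕 on a finite value set G (nonempty) and λ ∈ [0,1]. Then the minimax λ-regret R_λ*(𝓕) equals the infimum of θ over all tuples (φ, θ, α, β) where φ : G → ℝ satisfies φ(s) ≥ 0 and Σ_{s∈G} φ(s) = 1, θ ∈ ℝ, α : I × G → ℝ, β : J × G → ℝ, subject to: (a) θ ≥ Σ_{i∈I} α_i(p)·m_i + Σ_{j∈J} β_j(p)·q_j for all p ∈ G, and (b) λ·p·1{v ≥ p} − Σ_{s∈G, s ≤ v} s·φ(s) − Σ_{i∈I} α_i(p)·v^i − Σ_{j∈J} β_j(p)·1{v ≥ r_j} ≤ 0 for all v, p ∈ G. The infimum is attained, and for any optimal tuple the mechanism Φ with weights φ satisfies R_λ^Φ(𝓕) = R_λ*(𝓕). -/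

import Mathlib

noncomputable section

namespace RobustPricing

/-- A probability weight vector on the grid `{v 0, …, v K}`. -/
def IsDist {K : ℕ} (f : Fin (K + 1) → ℝ) : Prop :=
  (∀ i, 0 ≤ f i) ∧ ∑ i, f i = 1

/-- Tail probability `F̄(p) = ∑_{v ∈ G, v ≥ p} f(v)`. -/
def tail {K : ℕ} (v f : Fin (K + 1) → ℝ) (p : ℝ) : ℝ :=
  ∑ i, if p ≤ v i then f i else 0

/-- Expected revenue of the price distribution `φ` against the value distribution `f`. -/
def revenue {K : ℕ} (v φ f : Fin (K + 1) → ℝ) : ℝ :=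
  ∑ i, φ i * v i * tail v f (v i)

/-- `OPT(F) = max_{p ∈ G} p · F̄(p)`. -/
def opt {K : ℕ} (v f : Fin (K + 1) → ℝ) : ℝ :=
  ⨆ i, v i * tail v f (v i)

/-- `Regret(Φ, F) = OPT(F) − Revenue(Φ, F)`. -/
def regret {K : ℕ} (v φ f : Fin (K + 1) → ℝ) : ℝ :=
  opt v f - revenue v φ f

/-- `Ratio(Φ, F) = Revenue(Φ, F) / OPT(F)`. -/
def ratio {K : ℕ} (v φ f : Fin (K + 1) → ℝ) : ℝ :=
  revenue v φ f / opt v f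

/-- The set of mechanisms (price distributions on the grid). -/
def Mech (K : ℕ) : Set (Fin (K + 1) → ℝ) := {φ | IsDist φ}

/-- Worst-case `λ`-regret `R_λ^Φ(𝓕)` of mechanism `φ` over the uncertainty set `F`. -/
def wcReg {K : ℕ} (v : Fin (K + 1) → ℝ) (F : Set (Fin (K + 1) → ℝ))
    (φ : Fin (K + 1) → ℝ) (l : ℝ) : ℝ :=
  sSup ((fun f => l * opt v f - revenue v φ f) '' F)

/-- Minimax `λ`-regret `R_λ*(𝓕)`. -/
def minimaxReg {K : ℕ} (v : Fin (K + 1) → ℝ) (F : Set (Fin (K + 1) → ℝ)) (l : ℝ) : ℝ :=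
  sInf ((fun φ => wcReg v F φ l) '' Mech K)

/-- Worst-case revenue `min_{F ∈ 𝓕} Revenue(Φ, F)`. -/
def worstRevenue {K : ℕ} (v : Fin (K + 1) → ℝ) (F : Set (Fin (K + 1) → ℝ))
    (φ : Fin (K + 1) → ℝ) : ℝ :=
  sInf ((fun f => revenue v φ f) '' F)

/-- Worst-case regret `max_{F ∈ 𝓕} Regret(Φ, F)`. -/
def worstRegret {K : ℕ} (v : Fin (K + 1) → ℝ) (F : Set (Fin (K + 1) → ℝ))
    (φ : Fin (K + 1) → ℝ) : ℝ :=
  sSup ((fun f => regret v φ f) '' F)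

/-- Worst-case ratio `min_{F ∈ 𝓕} Ratio(Φ, F)`. -/
def worstRatio {K : ℕ} (v : Fin (K + 1) → ℝ) (F : Set (Fin (K + 1) → ℝ))
    (φ : Fin (K + 1) → ℝ) : ℝ :=
  sInf ((fun f => ratio v φ f) '' F)

/-- Maximin revenue `θ*_Revenue(𝓕) = max_Φ min_{F ∈ 𝓕} Revenue(Φ, F)`. -/
def thetaRevStar {K : ℕ} (v : Fin (K + 1) → ℝ) (F : Set (Fin (K + 1) → ℝ)) : ℝ :=
  sSup ((fun φ => worstRevenue v F φ) '' Mech K)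

/-- Minimax regret `θ*_Regret(𝓕) = min_Φ max_{F ∈ 𝓕} Regret(Φ, F)`. -/
def thetaRegStar {K : ℕ} (v : Fin (K + 1) → ℝ) (F : Set (Fin (K + 1) → ℝ)) : ℝ :=
  sInf ((fun φ => worstRegret v F φ) '' Mech K)

/-- Maximin ratio `θ*_Ratio(𝓕) = max_Φ min_{F ∈ 𝓕} Ratio(Φ, F)`. -/
def thetaRatStar {K : ℕ} (v : Fin (K + 1) → ℝ) (F : Set (Fin (K + 1) → ℝ)) : ℝ :=
  sSup ((fun φ => worstRatio v F φ) '' Mech K)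

/-- Relative performance of `Φ` over all three criteria:
`RelPerf(Φ, All, 𝓕) = min_{F ∈ 𝓕} min{Rev/θ*_Rev, θ*_Reg/Reg, Ratio/θ*_Ratio}`. -/
def relPerfAll {K : ℕ} (v : Fin (K + 1) → ℝ) (F : Set (Fin (K + 1) → ℝ))
    (φ : Fin (K + 1) → ℝ) : ℝ :=
  sInf ((fun f => min (revenue v φ f / thetaRevStar v F)
    (min (thetaRegStar v F / regret v φ f) (ratio v φ f / thetaRatStar v F))) '' F)

/-- Multi-criterion robust approximation factor `c*(𝓕) = max_Φ RelPerf(Φ, All, 𝓕)`. -/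
def cstar {K : ℕ} (v : Fin (K + 1) → ℝ) (F : Set (Fin (K + 1) → ℝ)) : ℝ :=
  sSup ((fun φ => relPerfAll v F φ) '' Mech K)

/-- The moment–quantile uncertainty set: distributions on the grid whose `i`-th moments
are `m i` for `i ∈ I` and whose tail probability at `r j` is `q j` for `j ∈ J`. -/
def MQSet {K : ℕ} (v : Fin (K + 1) → ℝ) (I : Finset ℕ) (m : ℕ → ℝ)
    (J : Finset ℕ) (r q : ℕ → ℝ) : Set (Fin (K + 1) → ℝ) :=
  {f | IsDist f ∧ (∀ i ∈ I, ∑ k, f k * v k ^ i = m i) ∧ (∀ j ∈ J, tail v f (r j) = q j)}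

/-- Cumulative term `∑_{s ∈ G, s ≤ v_w} s · φ(s)`. -/
def cum {K : ℕ} (v φ : Fin (K + 1) → ℝ) (w : Fin (K + 1)) : ℝ :=
  ∑ s, if v s ≤ v w then v s * φ s else 0

/-- Feasibility of dual variables `(θ, α, β)` in the dual LP for the worst-case λ-regret:
(a) `θ ≥ ∑_i α_i(p) m_i + ∑_j β_j(p) q_j` for all prices `p ∈ G`, and
(b) `λ p 1{v ≥ p} − ∑_{s ≤ v} s φ(s) − ∑_i α_i(p) v^i − ∑_j β_j(p) 1{v ≥ r_j} ≤ 0`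
for all values `v` and prices `p` in `G`. -/
def dualFeas {K : ℕ} (v : Fin (K + 1) → ℝ) (I : Finset ℕ) (m : ℕ → ℝ)
    (J : Finset ℕ) (r q : ℕ → ℝ) (φ : Fin (K + 1) → ℝ) (l θ : ℝ)
    (α β : ℕ → Fin (K + 1) → ℝ) : Prop :=
  (∀ p, ∑ i ∈ I, α i p * m i + ∑ j ∈ J, β j p * q j ≤ θ) ∧
  (∀ w p, l * v p * (if v p ≤ v w then 1 else 0) - cum v φ w
      - (∑ i ∈ I, α i p * v w ^ i)
      - (∑ j ∈ J, β j p * (if r j ≤ v w then 1 else 0)) ≤ 0)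


section Aux
open scoped InnerProductSpace RealInnerProductSpace

variable {ι : Type*} [Fintype ι] [DecidableEq ι]
variable {E : Type*} [NormedAddCommGroup E] [NormedSpace ℝ E] [FiniteDimensional ℝ E]

/-- Carathéodory step for cones. -/
lemma cone_carath (g : ι → E) :
    ∀ (N : ℕ) (s : Finset ι) (_ : s.card ≤ N) (c : ι → ℝ), (∀ i, 0 ≤ c i) → (∀ i ∉ s, c i = 0) →
    ∃ (t : Finset ι) (c' : ι → ℝ), (∀ i, 0 ≤ c' i) ∧ (∀ i ∉ t, c' i = 0) ∧
      (∑ i, c' i • g i = ∑ i, c i • g i) ∧ LinearIndependent ℝ (fun i : ↥t => g ↑i) := by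
  intro N
  induction N with
  | zero =>
    intro s hcard c h0 hs
    refine ⟨∅, c, h0, fun i _ => hs i (by simp [Finset.card_eq_zero.mp (Nat.le_zero.mp hcard)]), rfl, ?_⟩
    have : IsEmpty (↥(∅ : Finset ι)) := ⟨fun x => Finset.notMem_empty _ x.2⟩
    exact linearIndependent_empty_type
  | succ N ih =>
    intro s hcard c h0 hs
    by_cases hLI : LinearIndependent ℝ (fun i : ↥s => g ↑i)
    · exact ⟨s, c, h0, hs, rfl, hLI⟩
    · obtain ⟨d, hd0, i₁, hi₁⟩ := Fintype.not_linearIndependent_iff.mp hLI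
      set D : ι → ℝ := fun i => if h : i ∈ s then d ⟨i, h⟩ else 0 with hD
      have hDsum : ∑ i, D i • g i = 0 := by
        rw [← Finset.sum_subset (Finset.subset_univ s)
          (fun i _ hi => by simp [hD, dif_neg hi])]
        rw [← Finset.sum_attach s (fun i => D i • g i), ← hd0]
        exact Finset.sum_congr rfl fun i _ => by simp [hD, i.2]
      have hDne : D ↑i₁ ≠ 0 := by simpa [hD, i₁.2] using hi₁
      obtain ⟨e, he0, heS, hepos⟩ :
          ∃ e : ι → ℝ, (∑ i, e i • g i = 0) ∧ (∀ i ∉ s, e i = 0) ∧ ∃ i ∈ s, 0 < e i := by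
        rcases lt_or_gt_of_ne hDne with h | h
        · exact ⟨-D, by simpa using hDsum, fun i hi => by simp [hD, dif_neg hi],
            ⟨i₁, i₁.2, by simpa using h⟩⟩
        · exact ⟨D, hDsum, fun i hi => by simp [hD, dif_neg hi], ⟨i₁, i₁.2, h⟩⟩
      set s' : Finset ι := s.filter (fun i => 0 < e i) with hs'
      have hs'ne : s'.Nonempty := by
        obtain ⟨i, hi, hpos⟩ := hepos
        exact ⟨i, by simp [hs', hi, hpos]⟩
      obtain ⟨i₀, hi₀, hmin⟩ := Finset.exists_min_image s' (fun i => c i / e i) hs'ne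
      have hi₀s : i₀ ∈ s := (Finset.mem_filter.mp hi₀).1
      have hei₀ : 0 < e i₀ := (Finset.mem_filter.mp hi₀).2
      set τ : ℝ := c i₀ / e i₀ with hτ
      have hτ0 : 0 ≤ τ := div_nonneg (h0 i₀) hei₀.le
      set c'' : ι → ℝ := fun i => c i - τ * e i with hc''
      have key : ∀ i, 0 < e i → τ * e i ≤ c i := by
        intro i h
        have his : i ∈ s := by
          by_contra hns; rw [heS i hns] at h; exact lt_irrefl 0 h
        have hle : τ ≤ c i / e i := hmin i (by simp [hs', his, h])
        calc τ * e i ≤ c i / e i * e i := mul_le_mul_of_nonneg_right hle h.le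
          _ = c i := div_mul_cancel₀ _ h.ne'
      have hc''0 : ∀ i, 0 ≤ c'' i := by
        intro i
        rcases le_or_gt (e i) 0 with h | h
        · have : τ * e i ≤ 0 := mul_nonpos_of_nonneg_of_nonpos hτ0 h
          simp only [hc'']; linarith [h0 i]
        · simp only [hc'']; linarith [key i h]
      have hc''supp : ∀ i ∉ s.erase i₀, c'' i = 0 := by
        intro i hi
        rcases Finset.mem_erase.not.mp hi with h
        push_neg at h
        by_cases hi₀' : i = i₀
        · subst hi₀'
          simp only [hc'', hτ]
          field_simp
          ring
        · have hns : i ∉ s := h hi₀'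
          simp only [hc'', hs i hns, heS i hns]; ring
      have hcard' : (s.erase i₀).card ≤ N := by
        have := Finset.card_erase_of_mem hi₀s
        omega
      have hsum'' : ∑ i, c'' i • g i = ∑ i, c i • g i := by
        simp only [hc'', sub_smul, Finset.sum_sub_distrib, mul_smul]
        rw [← Finset.smul_sum, he0, smul_zero, sub_zero]
      obtain ⟨t, c', h1, h2, h3, h4⟩ := ih (s.erase i₀) hcard' c'' hc''0 hc''supp
      exact ⟨t, c', h1, h2, h3.trans hsum'', h4⟩

/-- The set of conical combinations of a finite family. -/
def coneSet (g : ι → E) : Set E :=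
  {z | ∃ c : ι → ℝ, (∀ i, 0 ≤ c i) ∧ z = ∑ i, c i • g i}

lemma isClosed_coneSet (g : ι → E) : IsClosed (coneSet g) := by
  classical
  have hrepr : coneSet g = ⋃ (t : Finset ι) (_ : LinearIndependent ℝ (fun i : ↥t => g ↑i)),
      {z | ∃ c : ι → ℝ, (∀ i, 0 ≤ c i) ∧ (∀ i ∉ t, c i = 0) ∧ z = ∑ i, c i • g i} := by
    ext z
    simp only [Set.mem_iUnion, Set.mem_setOf_eq, coneSet]
    constructor
    · rintro ⟨c, h0, rfl⟩
      obtain ⟨t, c', h1, h2, h3, h4⟩ :=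
        cone_carath g (Finset.univ.card) Finset.univ (le_refl _) c h0 (fun i hi => absurd (Finset.mem_univ i) hi)
      exact ⟨t, h4, c', h1, h2, h3.symm⟩
    · rintro ⟨t, _, c, h0, _, rfl⟩
      exact ⟨c, h0, rfl⟩
  rw [hrepr]
  apply isClosed_iUnion_of_finite
  intro t
  apply isClosed_iUnion_of_finite
  intro hLI
  -- this piece is the image of the nonneg orthant under an injective linear map
  set L : (↥t → ℝ) →ₗ[ℝ] E :=
    { toFun := fun c => ∑ i : ↥t, c i • g ↑i
      map_add' := by intro a b; simp [add_smul, Finset.sum_add_distrib]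
      map_smul' := by intro r a; simp [mul_smul, Finset.smul_sum] } with hL
  have hker : LinearMap.ker L = ⊥ := by
    rw [LinearMap.ker_eq_bot']
    intro c hc
    have := Fintype.linearIndependent_iff.mp hLI c hc
    funext i; exact this i
  have hemb := LinearMap.isClosedEmbedding_of_injective hker
  have himg : {z : E | ∃ c : ι → ℝ, (∀ i, 0 ≤ c i) ∧ (∀ i ∉ t, c i = 0) ∧ z = ∑ i, c i • g i}
      = L '' {c : ↥t → ℝ | ∀ i, 0 ≤ c i} := by
    ext z
    simp only [Set.mem_image, Set.mem_setOf_eq, hL, LinearMap.coe_mk, AddHom.coe_mk]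
    constructor
    · rintro ⟨c, h0, hsupp, rfl⟩
      refine ⟨fun i => c ↑i, fun i => h0 ↑i, ?_⟩
      rw [← Finset.sum_subset (Finset.subset_univ t) (fun i _ hi => by simp [hsupp i hi])]
      rw [← Finset.sum_attach t (fun i => c i • g i)]
      rfl
    · rintro ⟨c, h0, rfl⟩
      refine ⟨fun i => if h : i ∈ t then c ⟨i, h⟩ else 0, fun i => ?_, fun i hi => dif_neg hi, ?_⟩
      · by_cases h : i ∈ t
        · simpa [dif_pos h] using h0 ⟨i, h⟩
        · simp [dif_neg h]
      · rw [← Finset.sum_subset (Finset.subset_univ t) (fun i _ hi => by simp [dif_neg hi])]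
        rw [← Finset.sum_attach t (fun i => (if h : i ∈ t then c ⟨i, h⟩ else 0) • g i)]
        exact (Finset.sum_congr rfl fun i _ => by simp [i.2]).symm
  rw [himg]
  have hcl : IsClosed {c : ↥t → ℝ | ∀ i, 0 ≤ c i} := by
    have : {c : ↥t → ℝ | ∀ i, 0 ≤ c i} = ⋂ i, {c : ↥t → ℝ | 0 ≤ c i} := by
      ext c; simp
    rw [this]
    exact isClosed_iInter (fun i => isClosed_le continuous_const (continuous_apply i))
  exact hemb.isClosedMap _ hcl

/-- Generators of a coneSet are in the coneSet. -/
lemma mem_coneSet_gen (g : ι → E) (i : ι) : g i ∈ coneSet g := by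
  refine ⟨fun i' => if i' = i then 1 else 0, fun i' => by positivity, ?_⟩
  simp [ite_smul]

lemma zero_mem_coneSet (g : ι → E) : (0 : E) ∈ coneSet g :=
  ⟨fun _ => 0, fun _ => le_refl 0, by simp⟩

/-- The coneSet as a convex cone. -/
def coneCone (g : ι → E) : ConvexCone ℝ E where
  carrier := coneSet g
  smul_mem' := by
    rintro r hr z ⟨c, h0, rfl⟩
    exact ⟨fun i => r * c i, fun i => mul_nonneg hr.le (h0 i),
      by rw [Finset.smul_sum]; exact Finset.sum_congr rfl fun i _ => by simp [smul_smul]⟩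
  add_mem' := by
    rintro z ⟨a, ha, rfl⟩ z' ⟨b, hb, rfl⟩
    exact ⟨fun i => a i + b i, fun i => add_nonneg (ha i) (hb i),
      by rw [← Finset.sum_add_distrib]; exact Finset.sum_congr rfl fun i _ => (add_smul _ _ _).symm⟩

/-- Farkas' lemma for systems of linear inequalities: if `A y ≤ c` has no solution, then a
nonnegative combination of the rows yields `0 ≤ x` with negative constant. -/
lemma farkas_ineq {V T : Type*} [Fintype V] [Fintype T]
    (A : T → V → ℝ) (c : T → ℝ)
    (h : ¬ ∃ y : V → ℝ, ∀ t, ∑ v, A t v * y v ≤ c t) :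
    ∃ lam : T → ℝ, (∀ t, 0 ≤ lam t) ∧ (∀ v, ∑ t, lam t * A t v = 0) ∧ ∑ t, lam t * c t < 0 := by
  classical
  set E' := EuclideanSpace ℝ T
  -- generators
  set g : ((V ⊕ V) ⊕ T) → E' := fun i =>
    match i with
    | Sum.inl (Sum.inl v) => WithLp.toLp 2 (fun t => A t v : T → ℝ)
    | Sum.inl (Sum.inr v) => WithLp.toLp 2 (fun t => -(A t v) : T → ℝ)
    | Sum.inr t₀ => WithLp.toLp 2 (fun t => if t = t₀ then 1 else 0 : T → ℝ)
    with hg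
  -- membership characterization
  have hmem : ∀ z : E', z ∈ coneSet g ↔
      ∃ (y : V → ℝ) (s : T → ℝ), (∀ t, 0 ≤ s t) ∧ ∀ t, z t = ∑ v, A t v * y v + s t := by
    intro z
    constructor
    · rintro ⟨cc, h0, rfl⟩
      refine ⟨fun v => cc (Sum.inl (Sum.inl v)) - cc (Sum.inl (Sum.inr v)),
        fun t => cc (Sum.inr t), fun t => h0 _, fun t => ?_⟩
      have : (∑ i, cc i • g i) t = ∑ i, cc i * g i t := by
        rw [WithLp.ofLp_sum, Finset.sum_apply]; rfl
      rw [this, Fintype.sum_sum_type, Fintype.sum_sum_type]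
      simp only [hg, WithLp.ofLp_toLp]
      have h3 : ∑ x : T, cc (Sum.inr x) * (if t = x then 1 else 0) = cc (Sum.inr t) := by
        simp [mul_ite]
      rw [h3, ← Finset.sum_add_distrib]
      congr 1
      exact Finset.sum_congr rfl fun v _ => by ring
    · rintro ⟨y, s, hs, hz⟩
      refine ⟨fun i => match i with
        | Sum.inl (Sum.inl v) => max (y v) 0
        | Sum.inl (Sum.inr v) => max (-(y v)) 0
        | Sum.inr t => s t, ?_, ?_⟩
      · rintro ((v|v)|t) <;> simp [le_max_iff, hs]
      · ext t
        have expand : (∑ i, (fun i => match i with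
            | Sum.inl (Sum.inl v) => max (y v) 0
            | Sum.inl (Sum.inr v) => max (-(y v)) 0
            | Sum.inr t => s t) i • g i) t = ∑ i, (fun i => match i with
            | Sum.inl (Sum.inl v) => max (y v) 0
            | Sum.inl (Sum.inr v) => max (-(y v)) 0
            | Sum.inr t => s t) i * g i t := by
          rw [WithLp.ofLp_sum, Finset.sum_apply]; rfl
        rw [expand, Fintype.sum_sum_type, Fintype.sum_sum_type, hz t]
        simp only [hg, WithLp.ofLp_toLp]
        have h3 : ∑ x : T, s x * (if t = x then 1 else 0) = s t := by
          simp [mul_ite]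
        rw [h3]
        congr 1
        rw [← Finset.sum_add_distrib]
        refine Finset.sum_congr rfl fun v _ => ?_
        have hmax : max (y v) 0 - max (-y v) 0 = y v := by
          rcases le_total (y v) 0 with h | h
          · rw [max_eq_right h, max_eq_left (by linarith)]; ring
          · rw [max_eq_left h, max_eq_right (by linarith)]; ring
        have : A t v * y v = A t v * (max (y v) 0 - max (-y v) 0) := by rw [hmax]
        rw [this]
        ring
  -- the target is not in the cone
  have hnmem : (WithLp.toLp 2 c : E') ∉ coneSet g := by
    intro hc
    obtain ⟨y, s, hs, hz⟩ := (hmem (WithLp.toLp 2 c)).mp hc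
    exact h ⟨y, fun t => by rw [show c t = _ from hz t]; linarith [hs t]⟩
  -- separation
  obtain ⟨y, hy1, hy2⟩ := ProperCone.hyperplane_separation'
    ({ carrier := coneSet g
       add_mem' := fun ha hb => (coneCone g).add_mem' ha hb
       zero_mem' := zero_mem_coneSet g
       smul_mem' := by
         rintro r z ⟨cc, h0, rfl⟩
         exact ⟨fun i => (r : ℝ) * cc i, fun i => mul_nonneg r.2 (h0 i),
           by rw [show r • ∑ i, cc i • g i = (r : ℝ) • ∑ i, cc i • g i from rfl, Finset.smul_sum]; exact Finset.sum_congr rfl fun i _ => by simp [smul_smul]⟩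
       isClosed' := isClosed_coneSet g } : ProperCone ℝ E') hnmem
  have hinner : ∀ x : E', ⟪x, y⟫_ℝ = ∑ t, x t * y t := by
    intro x
    rw [PiLp.inner_apply]
    exact Finset.sum_congr rfl fun t _ => by simp [RCLike.inner_apply, conj_trivial, mul_comm]
  refine ⟨fun t => y t, ?_, ?_, ?_⟩
  · intro t
    have := hy1 _ (mem_coneSet_gen g (Sum.inr t))
    rw [hinner] at this
    simpa [hg, ite_mul] using this
  · intro v
    have h1 := hy1 _ (mem_coneSet_gen g (Sum.inl (Sum.inl v)))
    have h2 := hy1 _ (mem_coneSet_gen g (Sum.inl (Sum.inr v)))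
    rw [hinner] at h1 h2
    simp only [hg, WithLp.ofLp_toLp, neg_mul] at h1 h2
    have h2' : ∑ t, A t v * y t ≤ 0 := by
      have : (0:ℝ) ≤ -∑ t, A t v * y t := by
        rw [← Finset.sum_neg_distrib]; exact h2
      linarith
    have : ∑ t, A t v * y t = 0 := le_antisymm h2' h1
    rw [← this]
    exact Finset.sum_congr rfl fun t _ => mul_comm _ _
  · have : ⟪y, (WithLp.toLp 2 c : E')⟫_ℝ = ∑ t, y t * c t := by
      rw [PiLp.inner_apply]
      exact Finset.sum_congr rfl fun t _ => by simp [RCLike.inner_apply, conj_trivial, mul_comm]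
    rw [real_inner_comm, this] at hy2
    exact hy2

/-- LP strong duality for an equality-form LP over a sub-simplex feasible region. -/
theorem lp_dual {W R : Type*} [Fintype W] [Fintype R]
    (M : R → W → ℝ) (bb : R → ℝ) (a : W → ℝ) (ρ₀ : R)
    (hrow : ∀ w, M ρ₀ w = 1) (hb : bb ρ₀ = 1)
    (hne : {x : W → ℝ | (∀ w, 0 ≤ x w) ∧ ∀ ρ, ∑ w, x w * M ρ w = bb ρ}.Nonempty) :
    ∃ y : R → ℝ, (∀ w, a w ≤ ∑ ρ, y ρ * M ρ w) ∧
      ∑ ρ, y ρ * bb ρ ≤ sSup ((fun x => ∑ w, a w * x w) ''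
        {x : W → ℝ | (∀ w, 0 ≤ x w) ∧ ∀ ρ, ∑ w, x w * M ρ w = bb ρ}) := by
  classical
  set P : Set (W → ℝ) := {x | (∀ w, 0 ≤ x w) ∧ ∀ ρ, ∑ w, x w * M ρ w = bb ρ} with hP
  have hPsub : P ⊆ stdSimplex ℝ W := by
    rintro x ⟨h0, heq⟩
    refine ⟨h0, ?_⟩
    have := heq ρ₀
    simpa [hrow, hb] using this
  have hPclosed : IsClosed P := by
    have : P = (⋂ w, {x : W → ℝ | 0 ≤ x w}) ∩ ⋂ ρ, {x : W → ℝ | ∑ w, x w * M ρ w = bb ρ} := by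
      ext x; simp [hP, Set.mem_iInter, forall_and]
    rw [this]
    refine IsClosed.inter (isClosed_iInter fun w => isClosed_le continuous_const (continuous_apply w))
      (isClosed_iInter fun ρ => isClosed_eq ?_ continuous_const)
    exact continuous_finset_sum _ fun w _ => (continuous_apply w).mul continuous_const
  have hPcomp : IsCompact P := (isCompact_stdSimplex ℝ W).of_isClosed_subset hPclosed hPsub
  have hobj : Continuous fun x : W → ℝ => ∑ w, a w * x w :=
    continuous_finset_sum _ fun w _ => continuous_const.mul (continuous_apply w)
  set θ := sSup ((fun x => ∑ w, a w * x w) '' P) with hθ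
  have hSc : IsCompact ((fun x : W → ℝ => ∑ w, a w * x w) '' P) := hPcomp.image hobj
  have hub : ∀ x ∈ P, ∑ w, a w * x w ≤ θ :=
    fun x hx => le_csSup hSc.bddAbove ⟨x, hx, rfl⟩
  by_contra hcon
  push_neg at hcon
  -- set up the inequality system
  have hsys : ¬ ∃ y : R → ℝ, ∀ t : Option W,
      ∑ ρ, (fun t ρ => Option.elim t (bb ρ) (fun w => -(M ρ w))) t ρ * y ρ ≤
        Option.elim t θ (fun w => -(a w)) := by
    rintro ⟨y, hy⟩
    have hfeas : ∀ w, a w ≤ ∑ ρ, y ρ * M ρ w := by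
      intro w
      have := hy (some w)
      simp only [Option.elim] at this
      have h' : -∑ ρ, M ρ w * y ρ ≤ -a w := by
        rw [← Finset.sum_neg_distrib]
        simpa [neg_mul] using this
      have := neg_le_neg_iff.mp h'
      calc a w ≤ ∑ ρ, M ρ w * y ρ := this
        _ = ∑ ρ, y ρ * M ρ w := Finset.sum_congr rfl fun ρ _ => mul_comm _ _
    have hval : ∑ ρ, y ρ * bb ρ ≤ θ := by
      have := hy none
      simp only [Option.elim] at this
      calc ∑ ρ, y ρ * bb ρ = ∑ ρ, bb ρ * y ρ := Finset.sum_congr rfl fun ρ _ => mul_comm _ _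
        _ ≤ θ := this
    exact absurd hval (not_le.mpr (hcon y hfeas))
  obtain ⟨lam, hlam0, hlamA, hlamc⟩ := farkas_ineq _ _ hsys
  rw [Fintype.sum_option] at hlamc
  simp only [Option.elim] at hlamc
  have hrowEq : ∀ ρ, ∑ w, lam (some w) * M ρ w = lam none * bb ρ := by
    intro ρ
    have := hlamA ρ
    rw [Fintype.sum_option] at this
    simp only [Option.elim, mul_neg] at this
    have h' : lam none * bb ρ - ∑ w, lam (some w) * M ρ w = 0 := by
      rw [← this, sub_eq_add_neg, Finset.sum_neg_distrib]
    linarith [h']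
  rcases (hlam0 none).eq_or_lt with hln | hln
  · -- lam none = 0 : contradiction via the distribution row
    have h0 : ∑ w, lam (some w) * M ρ₀ w = 0 := by rw [hrowEq ρ₀, ← hln]; ring
    have hall : ∀ w ∈ Finset.univ, lam (some w) = 0 := by
      rw [← Finset.sum_eq_zero_iff_of_nonneg (fun w _ => hlam0 (some w))]
      simpa [hrow] using h0
    have : ∑ w, lam (some w) * -(a w) = 0 :=
      Finset.sum_eq_zero fun w hw => by rw [hall w hw]; ring
    rw [this, ← hln] at hlamc
    linarith
  · -- lam none > 0 : build a feasible point beating θ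
    set x : W → ℝ := fun w => lam (some w) / lam none with hx
    have hxP : x ∈ P := by
      constructor
      · exact fun w => div_nonneg (hlam0 (some w)) hln.le
      · intro ρ
        have : ∑ w, x w * M ρ w = (∑ w, lam (some w) * M ρ w) / lam none := by
          rw [Finset.sum_div]
          exact Finset.sum_congr rfl fun w _ => by rw [hx]; ring
        rw [this, hrowEq ρ, mul_div_cancel_left₀ _ hln.ne']
    have hobjx : ∑ w, a w * x w = (∑ w, lam (some w) * a w) / lam none := by
      rw [Finset.sum_div]
      exact Finset.sum_congr rfl fun w _ => by rw [hx]; ring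
    have hgt : θ < ∑ w, a w * x w := by
      rw [hobjx, lt_div_iff₀ hln]
      have : ∑ w, lam (some w) * -(a w) = -∑ w, lam (some w) * a w := by
        rw [← Finset.sum_neg_distrib]
        exact Finset.sum_congr rfl fun w _ => by ring
      rw [this] at hlamc
      linarith
    exact absurd (hub x hxP) (not_le.mpr hgt)

end Aux

section Main
variable {K : ℕ} {v : Fin (K + 1) → ℝ}

lemma tail_nonneg {f : Fin (K+1) → ℝ} (hf : ∀ i, 0 ≤ f i) (p : ℝ) : 0 ≤ tail v f p :=
  Finset.sum_nonneg fun i _ => by split <;> simp [hf i]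

lemma tail_le_one {f : Fin (K+1) → ℝ} (hf : IsDist f) (p : ℝ) : tail v f p ≤ 1 := by
  rw [← hf.2]
  exact Finset.sum_le_sum fun i _ => by split <;> simp [hf.1 i]

lemma tail_eq_sum_mul (f : Fin (K+1) → ℝ) (p : ℝ) :
    tail v f p = ∑ w, f w * (if p ≤ v w then 1 else 0) := by
  unfold tail
  exact Finset.sum_congr rfl fun w _ => by split <;> simp

/-- `opt` is attained. -/
lemma opt_attained (f : Fin (K+1) → ℝ) :
    ∃ p₀, opt v f = v p₀ * tail v f (v p₀) ∧ ∀ p, v p * tail v f (v p) ≤ opt v f := by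
  obtain ⟨p₀, hp₀⟩ := Finite.exists_max (fun p : Fin (K+1) => v p * tail v f (v p))
  have hub : ∀ p, v p * tail v f (v p) ≤ v p₀ * tail v f (v p₀) := hp₀
  have : opt v f = v p₀ * tail v f (v p₀) :=
    le_antisymm (ciSup_le hub)
      (le_ciSup (f := fun p => v p * tail v f (v p)) (Set.finite_range _).bddAbove p₀)
  exact ⟨p₀, this, fun p => this ▸ hub p⟩

variable (hv0 : ∀ i, 0 ≤ v i)
include hv0

lemma vle (i : Fin (K+1)) (hv : StrictMono v) : v i ≤ v (Fin.last K) :=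
  hv.monotone (Fin.le_last i)

lemma opt_nonneg {f : Fin (K+1) → ℝ} (hf : ∀ i, 0 ≤ f i) : 0 ≤ opt v f := by
  obtain ⟨p₀, heq, hub⟩ := opt_attained (v := v) f
  rw [heq]
  exact mul_nonneg (hv0 p₀) (tail_nonneg hf _)

lemma opt_le {f : Fin (K+1) → ℝ} (hv : StrictMono v) (hf : IsDist f) :
    opt v f ≤ v (Fin.last K) := by
  obtain ⟨p₀, heq, _⟩ := opt_attained (v := v) f
  rw [heq]
  calc v p₀ * tail v f (v p₀) ≤ v p₀ * 1 :=
        mul_le_mul_of_nonneg_left (tail_le_one hf _) (hv0 p₀)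
    _ = v p₀ := mul_one _
    _ ≤ v (Fin.last K) := vle hv0 p₀ hv

lemma revenue_nonneg {φ f : Fin (K+1) → ℝ} (hφ : ∀ i, 0 ≤ φ i) (hf : ∀ i, 0 ≤ f i) :
    0 ≤ revenue v φ f :=
  Finset.sum_nonneg fun i _ => mul_nonneg (mul_nonneg (hφ i) (hv0 i)) (tail_nonneg hf _)

lemma revenue_le {φ f : Fin (K+1) → ℝ} (hv : StrictMono v) (hφ : IsDist φ) (hf : IsDist f) :
    revenue v φ f ≤ v (Fin.last K) := by
  calc revenue v φ f ≤ ∑ i, φ i * v (Fin.last K) := by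
        refine Finset.sum_le_sum fun i _ => ?_
        calc φ i * v i * tail v f (v i) ≤ φ i * v i * 1 :=
              mul_le_mul_of_nonneg_left (tail_le_one hf _) (mul_nonneg (hφ.1 i) (hv0 i))
          _ = φ i * v i := mul_one _
          _ ≤ φ i * v (Fin.last K) := mul_le_mul_of_nonneg_left (vle hv0 i hv) (hφ.1 i)
    _ = v (Fin.last K) := by rw [← Finset.sum_mul, hφ.2, one_mul]

omit hv0

/-- Key identity: `∑_w f(w) · cum(w) = Revenue(φ, f)`. -/
lemma sum_mul_cum (φ f : Fin (K+1) → ℝ) :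
    ∑ w, f w * cum v φ w = revenue v φ f := by
  unfold cum revenue
  have lhs : (∑ w, f w * ∑ s, if v s ≤ v w then v s * φ s else 0)
      = ∑ w, ∑ s, if v s ≤ v w then f w * (v s * φ s) else 0 := by
    refine Finset.sum_congr rfl fun w _ => ?_
    rw [Finset.mul_sum]
    exact Finset.sum_congr rfl fun s _ => by split <;> simp
  rw [lhs, Finset.sum_comm]
  refine Finset.sum_congr rfl fun s _ => ?_
  rw [tail_eq_sum_mul, Finset.mul_sum]
  exact Finset.sum_congr rfl fun w _ => by split <;> simp <;> ring

lemma mqset_isDist {I : Finset ℕ} {m : ℕ → ℝ} {J : Finset ℕ} {r q : ℕ → ℝ}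
    {f : Fin (K+1) → ℝ} (hf : f ∈ MQSet v I m J r q) : IsDist f := hf.1

/-- Weak duality: any dual-feasible `θ` dominates the regret of `φ` against any `f ∈ 𝓕`. -/
lemma weak_duality {I : Finset ℕ} {m : ℕ → ℝ} {J : Finset ℕ} {r q : ℕ → ℝ}
    {φ : Fin (K+1) → ℝ} {l θ : ℝ} {α β : ℕ → Fin (K+1) → ℝ}
    (hl0 : 0 ≤ l) (hdf : dualFeas v I m J r q φ l θ α β)
    {f : Fin (K+1) → ℝ} (hf : f ∈ MQSet v I m J r q) :
    l * opt v f - revenue v φ f ≤ θ := by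
  obtain ⟨hfd, hmom, hquant⟩ := hf
  obtain ⟨p₀, hopt, _⟩ := opt_attained (v := v) f
  have hb := hdf.2
  have hsum : ∑ w, f w * (l * v p₀ * (if v p₀ ≤ v w then 1 else 0) - cum v φ w
      - (∑ i ∈ I, α i p₀ * v w ^ i)
      - (∑ j ∈ J, β j p₀ * (if r j ≤ v w then 1 else 0))) ≤ 0 := by
    refine Finset.sum_nonpos fun w _ => mul_nonpos_of_nonneg_of_nonpos (hfd.1 w) (hb w p₀)
  have hexp : ∑ w, f w * (l * v p₀ * (if v p₀ ≤ v w then 1 else 0) - cum v φ w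
      - (∑ i ∈ I, α i p₀ * v w ^ i)
      - (∑ j ∈ J, β j p₀ * (if r j ≤ v w then 1 else 0)))
      = l * v p₀ * tail v f (v p₀) - revenue v φ f
        - (∑ i ∈ I, α i p₀ * m i) - (∑ j ∈ J, β j p₀ * q j) := by
    simp only [mul_sub]
    rw [Finset.sum_sub_distrib, Finset.sum_sub_distrib, Finset.sum_sub_distrib]
    congr 1
    · congr 1
      · congr 1
        · rw [tail_eq_sum_mul, Finset.mul_sum]
          exact Finset.sum_congr rfl fun w _ => by ring
        · exact sum_mul_cum φ f
      · have hstep : ∀ x, f x * ∑ i ∈ I, α i p₀ * v x ^ i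
            = ∑ i ∈ I, α i p₀ * (f x * v x ^ i) := by
          intro x; rw [Finset.mul_sum]; exact Finset.sum_congr rfl fun i _ => by ring
        rw [Finset.sum_congr rfl fun x _ => hstep x, Finset.sum_comm]
        refine Finset.sum_congr rfl fun i hi => ?_
        rw [← Finset.mul_sum, hmom i hi]
    · have hstep : ∀ x, f x * ∑ j ∈ J, β j p₀ * (if r j ≤ v x then 1 else 0)
          = ∑ j ∈ J, β j p₀ * (f x * (if r j ≤ v x then 1 else 0)) := by
        intro x; rw [Finset.mul_sum]; exact Finset.sum_congr rfl fun j _ => by ring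
      rw [Finset.sum_congr rfl fun x _ => hstep x, Finset.sum_comm]
      refine Finset.sum_congr rfl fun j hj => ?_
      rw [← Finset.mul_sum, ← tail_eq_sum_mul, hquant j hj]
  have hA := hdf.1 p₀
  rw [hexp] at hsum
  rw [hopt, ← mul_assoc]
  linarith


variable {I : Finset ℕ} {m : ℕ → ℝ} {J : Finset ℕ} {r q : ℕ → ℝ} {l : ℝ}

/-- For a distribution mechanism, the objective values over `𝓕` are within `[-V, V]`. -/
lemma obj_bounds (hv : StrictMono v) (hv0 : ∀ i, 0 ≤ v i) (hl : l ∈ Set.Icc (0:ℝ) 1)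
    {φ f : Fin (K+1) → ℝ} (hφ : IsDist φ) (hf : f ∈ MQSet v I m J r q) :
    -(v (Fin.last K)) ≤ l * opt v f - revenue v φ f ∧
      l * opt v f - revenue v φ f ≤ v (Fin.last K) := by
  have hfd : IsDist f := hf.1
  have h1 : 0 ≤ l * opt v f := mul_nonneg hl.1 (opt_nonneg hv0 hfd.1)
  have h2 : l * opt v f ≤ v (Fin.last K) := by
    calc l * opt v f ≤ 1 * opt v f :=
          mul_le_mul_of_nonneg_right hl.2 (opt_nonneg hv0 hfd.1)
      _ = opt v f := one_mul _
      _ ≤ v (Fin.last K) := opt_le hv0 hv hfd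
  have h3 : 0 ≤ revenue v φ f := revenue_nonneg hv0 hφ.1 hfd.1
  have h4 : revenue v φ f ≤ v (Fin.last K) := revenue_le hv0 hv hφ hfd
  constructor <;> linarith

lemma wcReg_bddAbove (hv : StrictMono v) (hv0 : ∀ i, 0 ≤ v i) (hl : l ∈ Set.Icc (0:ℝ) 1)
    {φ : Fin (K+1) → ℝ} (hφ : IsDist φ) :
    BddAbove ((fun f => l * opt v f - revenue v φ f) '' MQSet v I m J r q) := by
  refine ⟨v (Fin.last K), ?_⟩
  rintro x ⟨f, hf, rfl⟩
  exact (obj_bounds hv hv0 hl hφ hf).2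

lemma le_wcReg (hv : StrictMono v) (hv0 : ∀ i, 0 ≤ v i) (hl : l ∈ Set.Icc (0:ℝ) 1)
    {φ : Fin (K+1) → ℝ} (hφ : IsDist φ) {f : Fin (K+1) → ℝ}
    (hf : f ∈ MQSet v I m J r q) :
    l * opt v f - revenue v φ f ≤ wcReg v (MQSet v I m J r q) φ l :=
  le_csSup (wcReg_bddAbove hv hv0 hl hφ) ⟨f, hf, rfl⟩

lemma wcReg_le (hMQ : (MQSet v I m J r q).Nonempty) {φ : Fin (K+1) → ℝ} {c : ℝ}
    (h : ∀ f ∈ MQSet v I m J r q, l * opt v f - revenue v φ f ≤ c) :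
    wcReg v (MQSet v I m J r q) φ l ≤ c := by
  refine csSup_le (hMQ.image _) ?_
  rintro x ⟨f, hf, rfl⟩
  exact h f hf

lemma wcReg_lb (hv : StrictMono v) (hv0 : ∀ i, 0 ≤ v i) (hl : l ∈ Set.Icc (0:ℝ) 1)
    (hMQ : (MQSet v I m J r q).Nonempty) {φ : Fin (K+1) → ℝ} (hφ : IsDist φ) :
    -(v (Fin.last K)) ≤ wcReg v (MQSet v I m J r q) φ l := by
  obtain ⟨f₀, hf₀⟩ := hMQ
  exact le_trans (obj_bounds hv hv0 hl hφ hf₀).1 (le_wcReg hv hv0 hl hφ hf₀)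

lemma minimaxReg_bddBelow (hv : StrictMono v) (hv0 : ∀ i, 0 ≤ v i) (hl : l ∈ Set.Icc (0:ℝ) 1)
    (hMQ : (MQSet v I m J r q).Nonempty) :
    BddBelow ((fun φ => wcReg v (MQSet v I m J r q) φ l) '' Mech K) := by
  refine ⟨-(v (Fin.last K)), ?_⟩
  rintro x ⟨φ, hφ, rfl⟩
  exact wcReg_lb hv hv0 hl hMQ hφ

lemma minimaxReg_le (hv : StrictMono v) (hv0 : ∀ i, 0 ≤ v i) (hl : l ∈ Set.Icc (0:ℝ) 1)
    (hMQ : (MQSet v I m J r q).Nonempty) {φ : Fin (K+1) → ℝ} (hφ : IsDist φ) :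
    minimaxReg v (MQSet v I m J r q) l ≤ wcReg v (MQSet v I m J r q) φ l :=
  csInf_le (minimaxReg_bddBelow hv hv0 hl hMQ) ⟨φ, hφ, rfl⟩

/-- The minimax regret is attained by some mechanism. -/
lemma minimax_attained (hv : StrictMono v) (hv0 : ∀ i, 0 ≤ v i) (hl : l ∈ Set.Icc (0:ℝ) 1)
    (hMQ : (MQSet v I m J r q).Nonempty) :
    ∃ φ, IsDist φ ∧ wcReg v (MQSet v I m J r q) φ l = minimaxReg v (MQSet v I m J r q) l := by
  classical
  set V := v (Fin.last K) with hV
  have hV0 : 0 ≤ V := hv0 _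
  set C : ℝ := (K+1 : ℝ) * V with hC
  have hC0 : (0:ℝ) ≤ C := by positivity
  have key : ∀ φ φ' : Fin (K+1) → ℝ, IsDist φ' → wcReg v (MQSet v I m J r q) φ l
      ≤ wcReg v (MQSet v I m J r q) φ' l + C * dist φ φ' := by
    intro φ φ' hφ'
    refine csSup_le (hMQ.image _) ?_
    rintro x ⟨f, hf, rfl⟩
    have hfd : IsDist f := hf.1
    have hrev : revenue v φ' f - revenue v φ f ≤ C * dist φ φ' := by
      have hdiff : revenue v φ' f - revenue v φ f = ∑ i, (φ' i - φ i) * (v i * tail v f (v i)) := by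
        unfold revenue
        rw [← Finset.sum_sub_distrib]
        exact Finset.sum_congr rfl fun i _ => by ring
      rw [hdiff]
      calc ∑ i, (φ' i - φ i) * (v i * tail v f (v i))
          ≤ ∑ _i : Fin (K+1), dist φ φ' * V := by
            refine Finset.sum_le_sum fun i _ => ?_
            have h1 : (φ' i - φ i) ≤ |φ' i - φ i| := le_abs_self _
            have h2 : |φ' i - φ i| ≤ dist φ φ' := by
              rw [← Real.dist_eq, dist_comm (φ' i)]
              exact dist_le_pi_dist φ φ' i
            have h3 : 0 ≤ v i * tail v f (v i) := mul_nonneg (hv0 i) (tail_nonneg hfd.1 _)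
            have h4 : v i * tail v f (v i) ≤ V := by
              calc v i * tail v f (v i) ≤ v i * 1 :=
                    mul_le_mul_of_nonneg_left (tail_le_one hfd _) (hv0 i)
                _ = v i := mul_one _
                _ ≤ V := vle hv0 i hv
            calc (φ' i - φ i) * (v i * tail v f (v i))
                ≤ |φ' i - φ i| * (v i * tail v f (v i)) := mul_le_mul_of_nonneg_right h1 h3
              _ ≤ dist φ φ' * V := mul_le_mul h2 h4 h3 dist_nonneg
        _ = C * dist φ φ' := by
            rw [Finset.sum_const, Finset.card_univ, Fintype.card_fin, nsmul_eq_mul]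
            push_cast; ring
    show l * opt v f - revenue v φ f ≤ _
    have hle : l * opt v f - revenue v φ f
        = (l * opt v f - revenue v φ' f) + (revenue v φ' f - revenue v φ f) := by ring
    rw [hle]
    exact add_le_add (le_csSup (wcReg_bddAbove hv hv0 hl hφ') ⟨f, hf, rfl⟩) hrev
  have hlip : LipschitzOnWith C.toNNReal (fun φ => wcReg v (MQSet v I m J r q) φ l) (Mech K) := by
    rw [lipschitzOnWith_iff_dist_le_mul]
    intro x hx y hy
    rw [Real.coe_toNNReal _ hC0, Real.dist_eq, abs_sub_le_iff]
    constructor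
    · have := key x y hy
      linarith
    · have := key y x hx
      rw [dist_comm] at this
      linarith
  have hMechC : IsCompact (Mech K) := by
    have : Mech K = stdSimplex ℝ (Fin (K+1)) := rfl
    rw [this]
    exact isCompact_stdSimplex _ _
  have himg : IsCompact ((fun φ => wcReg v (MQSet v I m J r q) φ l) '' Mech K) :=
    hMechC.image_of_continuousOn hlip.continuousOn
  have hMechNe : (Mech K).Nonempty := by
    refine ⟨fun _ => (K+1 : ℝ)⁻¹, fun i => by positivity, ?_⟩
    rw [Finset.sum_const, Finset.card_univ, Fintype.card_fin, nsmul_eq_mul]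
    push_cast
    field_simp
  have hmem := himg.sInf_mem (hMechNe.image _)
  obtain ⟨φ₀, hφ₀, heq⟩ := hmem
  exact ⟨φ₀, hφ₀, heq⟩

/-- Strong duality: an optimal mechanism admits dual variables certifying the minimax regret. -/
lemma strong_duality (hv : StrictMono v) (hv0 : ∀ i, 0 ≤ v i) (hl : l ∈ Set.Icc (0:ℝ) 1)
    (hI0 : 0 ∈ I) (hm0 : m 0 = 1) (hMQ : (MQSet v I m J r q).Nonempty)
    {φs : Fin (K+1) → ℝ} (hφs : IsDist φs)
    (hopt : wcReg v (MQSet v I m J r q) φs l = minimaxReg v (MQSet v I m J r q) l) :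
    ∃ α β : ℕ → Fin (K + 1) → ℝ,
      dualFeas v I m J r q φs l (minimaxReg v (MQSet v I m J r q) l) α β := by
  classical
  set M : ({i // i ∈ I} ⊕ {j // j ∈ J}) → Fin (K+1) → ℝ :=
    fun ρ w => Sum.elim (fun i : {i // i ∈ I} => v w ^ (i : ℕ))
      (fun j : {j // j ∈ J} => if r j ≤ v w then 1 else 0) ρ with hM
  set bb : ({i // i ∈ I} ⊕ {j // j ∈ J}) → ℝ := Sum.elim (fun i => m i) (fun j => q j) with hbb
  have hPF : {x : Fin (K+1) → ℝ | (∀ w, 0 ≤ x w) ∧ ∀ ρ, ∑ w, x w * M ρ w = bb ρ}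
      = MQSet v I m J r q := by
    ext x
    simp only [Set.mem_setOf_eq, MQSet, IsDist]
    constructor
    · rintro ⟨h0, heq⟩
      refine ⟨⟨h0, ?_⟩, fun i hi => ?_, fun j hj => ?_⟩
      · have := heq (Sum.inl ⟨0, hI0⟩)
        simp only [hM, hbb, Sum.elim_inl, pow_zero, mul_one] at this
        rw [hm0] at this
        exact this
      · exact heq (Sum.inl ⟨i, hi⟩)
      · have := heq (Sum.inr ⟨j, hj⟩)
        simp only [hM, hbb, Sum.elim_inr] at this
        rw [tail_eq_sum_mul]
        exact this
    · rintro ⟨⟨h0, _⟩, hmom, hq⟩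
      refine ⟨h0, ?_⟩
      rintro (⟨i, hi⟩ | ⟨j, hj⟩)
      · exact hmom i hi
      · simp only [hM, hbb, Sum.elim_inr]
        rw [← tail_eq_sum_mul]
        exact hq j hj
  have hrow : ∀ w, M (Sum.inl ⟨0, hI0⟩) w = 1 := fun w => by simp [hM]
  have hbrow : bb (Sum.inl ⟨0, hI0⟩) = 1 := hm0
  -- dual variables for each price p
  have H : ∀ p : Fin (K+1), ∃ y : ({i // i ∈ I} ⊕ {j // j ∈ J}) → ℝ,
      (∀ w, (l * v p * (if v p ≤ v w then 1 else 0) - cum v φs w) ≤ ∑ ρ, y ρ * M ρ w) ∧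
      ∑ ρ, y ρ * bb ρ ≤ minimaxReg v (MQSet v I m J r q) l := by
    intro p
    set a : Fin (K+1) → ℝ := fun w => l * v p * (if v p ≤ v w then 1 else 0) - cum v φs w with ha
    obtain ⟨y, hy1, hy2⟩ := lp_dual M bb a (Sum.inl ⟨0, hI0⟩) hrow hbrow (hPF ▸ hMQ)
    refine ⟨y, hy1, le_trans hy2 ?_⟩
    rw [hPF]
    refine csSup_le (hMQ.image _) ?_
    rintro _ ⟨x, hx, rfl⟩
    show ∑ w, a w * x w ≤ minimaxReg v (MQSet v I m J r q) l
    have hobjx : ∑ w, a w * x w = l * v p * tail v x (v p) - revenue v φs x := by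
      simp only [ha, sub_mul]
      rw [Finset.sum_sub_distrib]
      congr 1
      · rw [tail_eq_sum_mul, Finset.mul_sum]
        exact Finset.sum_congr rfl fun w _ => by ring
      · rw [← sum_mul_cum φs x]
        exact Finset.sum_congr rfl fun w _ => mul_comm _ _
    rw [hobjx, ← hopt]
    obtain ⟨px, hpx1, hpx2⟩ := opt_attained (v := v) x
    have h1 : v p * tail v x (v p) ≤ opt v x := hpx2 p
    have h2 : l * v p * tail v x (v p) ≤ l * opt v x := by
      rw [mul_assoc]
      exact mul_le_mul_of_nonneg_left h1 hl.1
    have h3 := le_wcReg hv hv0 hl hφs hx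
    linarith
  choose y hy1 hy2 using H
  set α : ℕ → Fin (K+1) → ℝ := fun i p => if h : i ∈ I then y p (Sum.inl ⟨i, h⟩) else 0 with hα
  set β : ℕ → Fin (K+1) → ℝ := fun j p => if h : j ∈ J then y p (Sum.inr ⟨j, h⟩) else 0 with hβ
  have hconv : ∀ (p : Fin (K+1)) (g : ℕ → ℝ) (g' : ℕ → ℝ),
      True := fun _ _ _ => trivial
  have hconvI : ∀ (p : Fin (K+1)) (c : ℕ → ℝ),
      ∑ i ∈ I, α i p * c i = ∑ i : {i // i ∈ I}, y p (Sum.inl i) * c ↑i := by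
    intro p c
    rw [← Finset.sum_coe_sort I (fun i => α i p * c i)]
    refine Finset.sum_congr rfl fun i _ => ?_
    simp only [hα, dif_pos i.2]
  have hconvJ : ∀ (p : Fin (K+1)) (c : ℕ → ℝ),
      ∑ j ∈ J, β j p * c j = ∑ j : {j // j ∈ J}, y p (Sum.inr j) * c ↑j := by
    intro p c
    rw [← Finset.sum_coe_sort J (fun j => β j p * c j)]
    refine Finset.sum_congr rfl fun j _ => ?_
    simp only [hβ, dif_pos j.2]
  refine ⟨α, β, ?_, ?_⟩
  · -- constraint (a)
    intro p
    have := hy2 p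
    rw [Fintype.sum_sum_type] at this
    calc ∑ i ∈ I, α i p * m i + ∑ j ∈ J, β j p * q j
        = ∑ i : {i // i ∈ I}, y p (Sum.inl i) * bb (Sum.inl i)
          + ∑ j : {j // j ∈ J}, y p (Sum.inr j) * bb (Sum.inr j) := by
          rw [hconvI p (fun i => m i), hconvJ p (fun j => q j)]
          rfl
      _ ≤ _ := this
  · -- constraint (b)
    intro w p
    have := hy1 p w
    rw [Fintype.sum_sum_type] at this
    have hIseg : ∑ i : {i // i ∈ I}, y p (Sum.inl i) * M (Sum.inl i) w
        = ∑ i ∈ I, α i p * v w ^ i := by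
      rw [hconvI p (fun i => v w ^ i)]
      rfl
    have hJseg : ∑ j : {j // j ∈ J}, y p (Sum.inr j) * M (Sum.inr j) w
        = ∑ j ∈ J, β j p * (if r j ≤ v w then 1 else 0) := by
      rw [hconvJ p (fun j => if r j ≤ v w then 1 else 0)]
      rfl
    rw [hIseg, hJseg] at this
    linarith

end Main

/-- the minimax λ-regret over a moment–quantile uncertainty set equals the
(attained) infimum of `θ` over tuples `(φ, θ, α, β)` feasible for the dual LP; moreover any
optimal tuple yields a mechanism whose worst-case λ-regret equals the minimax λ-regret. -/
theorem stmt6 (K : ℕ) (v : Fin (K + 1) → ℝ) (hv : StrictMono v) (hv0 : ∀ i, 0 ≤ v i)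
    (I : Finset ℕ) (m : ℕ → ℝ) (J : Finset ℕ) (r q : ℕ → ℝ)
    (hI0 : 0 ∈ I) (hm0 : m 0 = 1) (hrG : ∀ j ∈ J, ∃ i, r j = v i)
    (hMQ : (MQSet v I m J r q).Nonempty)
    (l : ℝ) (hl : l ∈ Set.Icc (0 : ℝ) 1) :
    IsLeast {θ : ℝ | ∃ (φ : Fin (K + 1) → ℝ) (α β : ℕ → Fin (K + 1) → ℝ),
        IsDist φ ∧ dualFeas v I m J r q φ l θ α β}
      (minimaxReg v (MQSet v I m J r q) l) ∧
    (∀ (φ : Fin (K + 1) → ℝ) (α β : ℕ → Fin (K + 1) → ℝ), IsDist φ →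
      dualFeas v I m J r q φ l (minimaxReg v (MQSet v I m J r q) l) α β →
      wcReg v (MQSet v I m J r q) φ l = minimaxReg v (MQSet v I m J r q) l) := by
  obtain ⟨φs, hφs, hopt⟩ := minimax_attained hv hv0 hl hMQ
  obtain ⟨α, β, hdf⟩ := strong_duality hv hv0 hl hI0 hm0 hMQ hφs hopt
  refine ⟨⟨⟨φs, α, β, hφs, hdf⟩, ?_⟩, ?_⟩
  · -- lower bound: any dual-feasible θ dominates the minimax regret
    rintro θ ⟨φ, α', β', hφ, hdf'⟩
    exact (minimaxReg_le hv hv0 hl hMQ hφ).trans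
      (wcReg_le hMQ fun f hf => weak_duality hl.1 hdf' hf)
  · -- any mechanism that is dual-feasible at the minimax value is optimal
    intro φ α' β' hφ hdf'
    exact le_antisymm (wcReg_le hMQ fun f hf => weak_duality hl.1 hdf' hf)
      (minimaxReg_le hv hv0 hl hMQ hφ)
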